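/- Under the feature-matching construction with a label-flipping target partition, the composite classifier achieves minimal source error but maximal target error simultaneously with exactly matched feature distributions: there exists h with f_*P_s = f_*P_t, ε_s(h) = ε_s(Ω*_s), and ε_t(h) = 1 − ε_t(Ω*_t), assuming disjoint supports and P_s(Ω*_s) = P_t(Ω*_t) = 1/2. -/

import Mathlib

open MeasureTheory Set

/-!
On the support `X_s` of the source marginal, `Ω` coincides with `Ω*_s`, and on `X_t` with
`(Ω*_t)ᶜ`. The error `ε_p(Ω)` only depends on `Ω` up to null sets of the marginal, which gives
the source identity, and the target one because flipping a classifier turns each pointwise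
error `e ∈ {0, 1}` into `1 - e`. Both marginals give `Ω` mass `1/2`, and the law of `1_Ω` is
determined by that mass.
-/

/-- Generalization error of the indicator classifier `1_Ω`. -/
noncomputable def eps {X : Type*} [MeasurableSpace X]
    (p : Measure (X × Bool)) (Ω : Set X) : ℝ :=
  ∫ z, |(if z.2 then (1 : ℝ) else 0) - Ω.indicator (1 : X → ℝ) z.1| ∂p

theorem map_indicator_one_eq_of_measure_eq {α β : Type*} [MeasurableSpace α]
    [MeasurableSpace β] [Zero β] [One β] (μ ν : Measure α) [IsProbabilityMeasure μ]
    [IsProbabilityMeasure ν] {S : Set α} (hS : MeasurableSet S) (h : μ S = ν S) :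
    μ.map (S.indicator (1 : α → β)) = ν.map (S.indicator (1 : α → β)) := by
  have hmeas : Measurable (S.indicator (1 : α → β)) := measurable_one.indicator hS
  ext A hA
  rw [Measure.map_apply hmeas hA, Measure.map_apply hmeas hA]
  obtain hpre | hpre | hpre | hpre := indicator_one_preimage S A <;> rw [hpre]
  · simp
  · exact h
  · rw [prob_compl_eq_one_sub hS, prob_compl_eq_one_sub hS, h]
  · simp

theorem union_inter_ae_eq_left {α : Type*} [MeasurableSpace α] {μ : Measure α}
    {S T A B : Set α} (hST : Disjoint S T) (hS : ∀ᵐ x ∂μ, x ∈ S) :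
    (S ∩ A ∪ T ∩ B : Set α) =ᵐ[μ] A := by
  filter_upwards [hS] with x hx
  have hxT : x ∉ T := disjoint_left.mp hST hx
  change (x ∈ S ∩ A ∪ T ∩ B) = (x ∈ A)
  simp [hx, hxT]

section Eps

variable {X : Type*} [MeasurableSpace X]

theorem eps_congr_ae {p : Measure (X × Bool)} {Ω Ω' : Set X}
    (h : Ω =ᵐ[p.map Prod.fst] Ω') : eps p Ω = eps p Ω' := by
  refine integral_congr_ae ?_
  filter_upwards [ae_of_ae_map measurable_fst.aemeasurable
    (indicator_ae_eq_of_ae_eq_set (f := (1 : X → ℝ)) h)] with z hz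
  rw [hz]

theorem eps_compl (p : Measure (X × Bool)) [IsProbabilityMeasure p] {Ω : Set X}
    (hΩ : MeasurableSet Ω) : eps p Ωᶜ = 1 - eps p Ω := by
  set err : X × Bool → ℝ :=
    fun z => |(if z.2 then (1 : ℝ) else 0) - Ω.indicator (1 : X → ℝ) z.1|
  have herr_meas : Measurable err :=
    (((measurable_from_top (f := fun b : Bool => if b then (1 : ℝ) else 0)).comp
      measurable_snd).sub
      ((measurable_one.indicator hΩ).comp measurable_fst)).abs
  have herr_int : Integrable err p :=
    Integrable.of_bound herr_meas.aestronglyMeasurable 1 (ae_of_all _ fun ⟨x, b⟩ => by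
      by_cases hx : x ∈ Ω <;> cases b <;> simp [err, hx])
  calc eps p Ωᶜ = ∫ z, (1 - err z) ∂p := by
        refine integral_congr_ae (ae_of_all _ fun ⟨x, b⟩ => ?_)
        by_cases hx : x ∈ Ω <;> cases b <;> simp [err, hx]
    _ = 1 - eps p Ω := by
        rw [integral_sub (integrable_const 1) herr_int, integral_const, probReal_univ, one_smul]
        rfl

end Eps

theorem feature_matching_label_flipping_general {X : Type*} [MeasurableSpace X]
    (ps pt : Measure (X × Bool)) [IsProbabilityMeasure ps] [IsProbabilityMeasure pt]
    (Xs Xt : Set X) (hXs : MeasurableSet Xs) (hXt : MeasurableSet Xt)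
    (hdisj : Disjoint Xs Xt)
    (hPsXs : ps.map Prod.fst Xs = 1) (hPtXt : pt.map Prod.fst Xt = 1)
    (Ωs Ωt : Set X) (hΩs : MeasurableSet Ωs) (hΩt : MeasurableSet Ωt)
    (hms : ps.map Prod.fst Ωs = 1/2) (hmt : pt.map Prod.fst Ωt = 1/2) :
    (ps.map Prod.fst).map (((Xs ∩ Ωs) ∪ (Xt ∩ Ωtᶜ)).indicator (1 : X → ℝ)) =
      (pt.map Prod.fst).map (((Xs ∩ Ωs) ∪ (Xt ∩ Ωtᶜ)).indicator (1 : X → ℝ)) ∧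
    eps ps ((Xs ∩ Ωs) ∪ (Xt ∩ Ωtᶜ)) = eps ps Ωs ∧
    eps pt ((Xs ∩ Ωs) ∪ (Xt ∩ Ωtᶜ)) = 1 - eps pt Ωt := by
  have := Measure.isProbabilityMeasure_map (μ := ps) measurable_fst.aemeasurable
  have := Measure.isProbabilityMeasure_map (μ := pt) measurable_fst.aemeasurable
  have hsrc : (Xs ∩ Ωs ∪ Xt ∩ Ωtᶜ : Set X) =ᵐ[ps.map Prod.fst] Ωs :=
    union_inter_ae_eq_left hdisj
      ((ae_mem_iff_measure_eq hXs.nullMeasurableSet).2 (by rw [hPsXs, measure_univ]))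
  have htgt : (Xs ∩ Ωs ∪ Xt ∩ Ωtᶜ : Set X) =ᵐ[pt.map Prod.fst] (Ωtᶜ : Set X) := by
    rw [union_comm]
    exact union_inter_ae_eq_left hdisj.symm
      ((ae_mem_iff_measure_eq hXt.nullMeasurableSet).2 (by rw [hPtXt, measure_univ]))
  refine ⟨map_indicator_one_eq_of_measure_eq _ _
    ((hXs.inter hΩs).union (hXt.inter hΩt.compl)) ?_, eps_congr_ae hsrc,
    (eps_congr_ae htgt).trans (eps_compl pt hΩt)⟩
  rw [measure_congr hsrc, measure_congr htgt, prob_compl_eq_one_sub (μ := pt.map Prod.fst) hΩt,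
    hms, hmt, one_div, ENNReal.one_sub_inv_two]

/-- The feature-matching construction with a label-flipping target partition: the classifier
`h = 1_Ω` with `Ω = (X_s ∩ Ω*_s) ∪ (X_t ∩ (Ω*_t)ᶜ)` has exactly matched feature distributions
`f_* P_s = f_* P_t`, minimal source error, and maximal target error `1 − ε_t(Ω*_t)`. -/
theorem feature_matching_label_flipping {X : Type*} [MeasurableSpace X]
    (ps pt : Measure (X × Bool)) [IsProbabilityMeasure ps] [IsProbabilityMeasure pt]
    (Xs Xt : Set X) (hXs : MeasurableSet Xs) (hXt : MeasurableSet Xt)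
    (hdisj : Disjoint Xs Xt)
    (hPsXs : ps.map Prod.fst Xs = 1) (hPtXt : pt.map Prod.fst Xt = 1)
    (Ωs Ωt : Set X) (hΩs : MeasurableSet Ωs) (hΩt : MeasurableSet Ωt)
    (hΩs_opt : ∀ Ω : Set X, MeasurableSet Ω → eps ps Ωs ≤ eps ps Ω)
    (hΩt_opt : ∀ Ω : Set X, MeasurableSet Ω → eps pt Ωt ≤ eps pt Ω)
    (hms : ps.map Prod.fst Ωs = 1/2) (hmt : pt.map Prod.fst Ωt = 1/2) :
    (ps.map Prod.fst).map (((Xs ∩ Ωs) ∪ (Xt ∩ Ωtᶜ)).indicator (1 : X → ℝ)) =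
      (pt.map Prod.fst).map (((Xs ∩ Ωs) ∪ (Xt ∩ Ωtᶜ)).indicator (1 : X → ℝ)) ∧
    eps ps ((Xs ∩ Ωs) ∪ (Xt ∩ Ωtᶜ)) = eps ps Ωs ∧
    eps pt ((Xs ∩ Ωs) ∪ (Xt ∩ Ωtᶜ)) = 1 - eps pt Ωt :=
  feature_matching_label_flipping_general ps pt Xs Xt hXs hXt hdisj hPsXs hPtXt Ωs Ωt hΩs hΩt hms
    hmt
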